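/- arXiv:1806.00091 — 5 statements merged into one kernel-verified Lean document; each statement's English description precedes it below -/
import Mathlib

section
/- The operator P defined by Pf(m) = ∫₀^{λ(m)} λ'(m) Q'(λ(m)) e^{Q(y)-Q(λ(m))} f(y) dy is a stochastic operator on L¹[0,∞): for every density f (f ≥ 0, ∫f = 1), Pf ≥ 0 and ∫₀^∞ Pf(m) dm = 1. -/
/-! For each `y` let `m₀ ≥ 0` be where `lam` crosses `max y m_P`; then `Q (lam m₀) = Q y`,
and the kernel of `P` in the variable `m` is `d/dm (-exp (Q y - Q (lam m)))` on `(m₀, ∞)` and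
zero on `(0, m₀)`, so it integrates to `1`. Tonelli then turns `∫ P f` into `∫ f = 1`. -/

open MeasureTheory Real Set Filter Topology

section ExpTail

variable {G G' : ℝ → ℝ}

theorem hasDerivAt_neg_exp_sub {x : ℝ} (hG : HasDerivAt G (G' x) x) (c : ℝ) :
    HasDerivAt (fun x => -exp (c - G x)) (G' x * exp (c - G x)) x :=
  ((hG.const_sub c).exp.neg).congr_deriv (by ring)

theorem tendsto_neg_exp_sub_atTop (hG : Tendsto G atTop atTop) (c : ℝ) :
    Tendsto (fun x => -exp (c - G x)) atTop (𝓝 0) := by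
  simpa [sub_eq_add_neg] using (tendsto_exp_atBot.comp (tendsto_atBot_add_const_left _ c
    (tendsto_neg_atTop_atBot.comp hG))).neg

theorem integrableOn_Ioi_mul_exp_sub (hG : ∀ x, HasDerivAt G (G' x) x) (hG' : ∀ x, 0 ≤ G' x)
    (htop : Tendsto G atTop atTop) (c a : ℝ) :
    IntegrableOn (fun x => G' x * exp (c - G x)) (Ioi a) :=
  integrableOn_Ioi_deriv_of_nonneg' (fun x _ => hasDerivAt_neg_exp_sub (hG x) c)
    (fun x _ => mul_nonneg (hG' x) (exp_pos _).le) (tendsto_neg_exp_sub_atTop htop c)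

theorem integral_Ioi_mul_exp_sub (hG : ∀ x, HasDerivAt G (G' x) x) (hG' : ∀ x, 0 ≤ G' x)
    (htop : Tendsto G atTop atTop) (c a : ℝ) :
    ∫ x in Ioi a, G' x * exp (c - G x) = exp (c - G a) := by
  rw [integral_Ioi_of_hasDerivAt_of_nonneg' (fun x _ => hasDerivAt_neg_exp_sub (hG x) c)
    (fun x _ => mul_nonneg (hG' x) (exp_pos _).le) (tendsto_neg_exp_sub_atTop htop c)]
  ring

end ExpTail

theorem integral_integral_mul_of_integral_eq_one {α β : Type*} [MeasurableSpace α]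
    [MeasurableSpace β] {μ : Measure α} {ν : Measure β} [SFinite μ] [SFinite ν]
    {K : α → β → ℝ} {f : β → ℝ} (hK : AEStronglyMeasurable (Function.uncurry K) (μ.prod ν))
    (hK0 : ∀ x y, 0 ≤ K x y) (hKi : ∀ᵐ y ∂ν, Integrable (K · y) μ)
    (hK1 : ∀ᵐ y ∂ν, ∫ x, K x y ∂μ = 1) (hf : Integrable f ν) :
    ∫ x, ∫ y, K x y * f y ∂ν ∂μ = ∫ y, f y ∂ν := by
  have hint : Integrable (Function.uncurry fun x y => K x y * f y) (μ.prod ν) := by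
    refine (integrable_prod_iff' (hK.mul hf.aestronglyMeasurable.comp_snd)).2 ⟨?_, ?_⟩
    · filter_upwards [hKi] with y hy using hy.mul_const (f y)
    · refine hf.norm.congr ?_
      filter_upwards [hK1] with y hy
      simp only [Pi.mul_apply, Function.uncurry_apply_pair, norm_mul, Real.norm_eq_abs,
        abs_of_nonneg (hK0 _ _), integral_mul_const, hy, one_mul]
  rw [integral_integral_swap hint]
  refine integral_congr_ae ?_
  filter_upwards [hK1] with y hy
  rw [integral_mul_const, hy, one_mul]

theorem measurable_derivative_of_hasDerivAt {f f' : ℝ → ℝ} (hf : ∀ x, HasDerivAt f (f' x) x) :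
    Measurable f' := by
  rw [show f' = deriv f from funext fun x => (hf x).deriv.symm]
  exact measurable_deriv f

noncomputable def opP (Q Qd lam lamd f : ℝ → ℝ) (m : ℝ) : ℝ :=
  lamd m * Qd (lam m) * ∫ y in (0:ℝ)..lam m, exp (Q y - Q (lam m)) * f y

noncomputable def kernelP (Q Qd lam lamd : ℝ → ℝ) (m y : ℝ) : ℝ :=
  if y ≤ lam m then lamd m * Qd (lam m) * exp (Q y - Q (lam m)) else 0

section KernelP

variable {m_P : ℝ} {Q Qd lam lamd : ℝ → ℝ}

theorem opP_nonneg (hmP : 0 ≤ m_P) (hQ : ∀ m, HasDerivAt Q (Qd m) m)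
    (hQ0 : ∀ m, m ≤ m_P → Q m = 0) (hQd : ∀ m, 0 ≤ Qd m) (hlamd : ∀ m, 0 ≤ lamd m)
    {f : ℝ → ℝ} (hf0 : ∀ y, 0 ≤ f y) (m : ℝ) : 0 ≤ opP Q Qd lam lamd f m := by
  rcases le_or_gt 0 (lam m) with h | h
  · exact mul_nonneg (mul_nonneg (hlamd m) (hQd _))
      (intervalIntegral.integral_nonneg h fun y _ => mul_nonneg (exp_pos _).le (hf0 y))
  · -- The interval integral may be negative here, but `Q` is constant near `lam m < m_P`.
    have hQ_nhds : Q =ᶠ[𝓝 (lam m)] fun _ => 0 := by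
      filter_upwards [Iio_mem_nhds (h.trans_le hmP)] with z hz using hQ0 z hz.le
    have : Qd (lam m) = 0 := (hQ _).unique ((hasDerivAt_const _ 0).congr_of_eventuallyEq hQ_nhds)
    rw [opP, this, mul_zero, zero_mul]

theorem opP_eq_integral_kernelP_mul (f : ℝ → ℝ) {m : ℝ} (hm : 0 ≤ lam m) :
    opP Q Qd lam lamd f m = ∫ y in Ioi 0, kernelP Q Qd lam lamd m y * f y := by
  have hK : (fun y => kernelP Q Qd lam lamd m y * f y) =
      (Iic (lam m)).indicator fun y => lamd m * Qd (lam m) * (exp (Q y - Q (lam m)) * f y) := by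
    ext y
    simp only [kernelP, indicator_apply, mem_Iic]
    split_ifs <;> ring
  rw [hK, integral_indicator measurableSet_Iic, Measure.restrict_restrict measurableSet_Iic,
    Iic_inter_Ioi, opP, intervalIntegral.integral_of_le hm, integral_const_mul]

theorem kernelP_nonneg (hQd : ∀ m, 0 ≤ Qd m) (hlamd : ∀ m, 0 ≤ lamd m) (m y : ℝ) :
    0 ≤ kernelP Q Qd lam lamd m y := by
  unfold kernelP
  split_ifs
  · exact mul_nonneg (mul_nonneg (hlamd m) (hQd _)) (exp_pos _).le
  · exact le_rfl

theorem measurable_kernelP (hQ : ∀ m, HasDerivAt Q (Qd m) m)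
    (hlam : ∀ m, HasDerivAt lam (lamd m) m) :
    Measurable (Function.uncurry (kernelP Q Qd lam lamd)) := by
  have hQm := (continuous_iff_continuousAt.2 fun x => (hQ x).continuousAt).measurable
  have hlamm := (continuous_iff_continuousAt.2 fun x => (hlam x).continuousAt).measurable
  have hQdm := measurable_derivative_of_hasDerivAt hQ
  have hlamdm := measurable_derivative_of_hasDerivAt hlam
  exact Measurable.ite (measurableSet_le measurable_snd (hlamm.comp measurable_fst))
    (by fun_prop) measurable_const

theorem exists_setOf_le_inter_Ioi_ae_eq_Ioi (hQ0 : ∀ m, m ≤ m_P → Q m = 0)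
    (hlam : StrictMono lam) (hlamc : Continuous lam) (hlam0 : lam 0 = m_P)
    (hlamtop : Tendsto lam atTop atTop) (y : ℝ) :
    ∃ m₀, Q (lam m₀) = Q y ∧ ({m | y ≤ lam m} ∩ Ioi 0 : Set ℝ) =ᵐ[volume] Ioi m₀ := by
  rcases le_or_gt y m_P with hy | hy
  · refine ⟨0, by rw [hlam0, hQ0 _ le_rfl, hQ0 _ hy], ?_⟩
    exact .of_eq (inter_eq_right.2 fun m hm => hy.trans (hlam0 ▸ (hlam hm).le))
  · obtain ⟨m₀, -, rfl⟩ :=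
      intermediate_value_Ici hlamc.continuousOn hlamtop (hlam0 ▸ hy.le : y ∈ Ici (lam 0))
    have hm₀ : 0 < m₀ := hlam.lt_iff_lt.1 (hlam0 ▸ hy)
    refine ⟨m₀, rfl, ?_⟩
    have : {m | lam m₀ ≤ lam m} ∩ Ioi 0 = Ici m₀ := by
      ext m
      simp only [mem_inter_iff, mem_ofPred_eq, mem_Ioi, mem_Ici, hlam.le_iff_le]
      exact ⟨And.left, fun h => ⟨h, hm₀.trans_le h⟩⟩
    exact (EventuallyEq.of_eq this).trans Ioi_ae_eq_Ici.symm

theorem kernelP_eq_indicator (y : ℝ) :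
    (fun m => kernelP Q Qd lam lamd m y) =
      {m | y ≤ lam m}.indicator fun m => lamd m * Qd (lam m) * exp (Q y - Q (lam m)) := by
  ext m
  simp only [kernelP, indicator_apply, mem_ofPred_eq]

theorem integrableOn_kernelP (hQ : ∀ m, HasDerivAt Q (Qd m) m) (hQ0 : ∀ m, m ≤ m_P → Q m = 0)
    (hQtop : Tendsto Q atTop atTop) (hQd : ∀ m, 0 ≤ Qd m)
    (hlam : ∀ m, HasDerivAt lam (lamd m) m) (hlamd : ∀ m, 0 < lamd m) (hlam0 : lam 0 = m_P)
    (hlamtop : Tendsto lam atTop atTop) (y : ℝ) :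
    IntegrableOn (fun m => kernelP Q Qd lam lamd m y) (Ioi 0) := by
  have hlamc := continuous_iff_continuousAt.2 fun x => (hlam x).continuousAt
  have hS : MeasurableSet {m | y ≤ lam m} := measurableSet_le measurable_const hlamc.measurable
  obtain ⟨m₀, -, hae⟩ := exists_setOf_le_inter_Ioi_ae_eq_Ioi hQ0
    (strictMono_of_hasDerivAt_pos hlam hlamd) hlamc hlam0 hlamtop y
  rw [kernelP_eq_indicator, IntegrableOn, integrable_indicator_iff hS, IntegrableOn,
    Measure.restrict_restrict hS]
  exact (integrableOn_Ioi_mul_exp_sub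
    (fun m => ((hQ _).comp m (hlam m)).congr_deriv (mul_comm _ _))
    (fun m => mul_nonneg (hlamd m).le (hQd _)) (hQtop.comp hlamtop) _ _).congr_set_ae hae

theorem integral_kernelP (hQ : ∀ m, HasDerivAt Q (Qd m) m) (hQ0 : ∀ m, m ≤ m_P → Q m = 0)
    (hQtop : Tendsto Q atTop atTop) (hQd : ∀ m, 0 ≤ Qd m)
    (hlam : ∀ m, HasDerivAt lam (lamd m) m) (hlamd : ∀ m, 0 < lamd m) (hlam0 : lam 0 = m_P)
    (hlamtop : Tendsto lam atTop atTop) (y : ℝ) :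
    ∫ m in Ioi 0, kernelP Q Qd lam lamd m y = 1 := by
  have hlamc := continuous_iff_continuousAt.2 fun x => (hlam x).continuousAt
  have hS : MeasurableSet {m | y ≤ lam m} := measurableSet_le measurable_const hlamc.measurable
  obtain ⟨m₀, hQm₀, hae⟩ := exists_setOf_le_inter_Ioi_ae_eq_Ioi hQ0
    (strictMono_of_hasDerivAt_pos hlam hlamd) hlamc hlam0 hlamtop y
  rw [kernelP_eq_indicator, integral_indicator hS, Measure.restrict_restrict hS,
    setIntegral_congr_set hae, integral_Ioi_mul_exp_sub (G := fun m => Q (lam m))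
    (fun m => ((hQ _).comp m (hlam m)).congr_deriv (mul_comm _ _))
    (fun m => mul_nonneg (hlamd m).le (hQd _)) (hQtop.comp hlamtop), hQm₀, sub_self, exp_zero]

end KernelP

theorem stmt4_general (m_P : ℝ) (hmP : 0 < m_P) (Q Qd lam lamd : ℝ → ℝ)
    (hQ : ∀ m, HasDerivAt Q (Qd m) m) (hQ0 : ∀ m, m ≤ m_P → Q m = 0)
    (hQtop : Tendsto Q atTop atTop)
    (hQd : ∀ m, 0 ≤ Qd m)
    (hlam : ∀ m, HasDerivAt lam (lamd m) m) (hlamd : ∀ m, 0 < lamd m)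
    (hlam0 : lam 0 = m_P) (hlamtop : Tendsto lam atTop atTop)
    (f : ℝ → ℝ) (hf0 : ∀ y, 0 ≤ f y) (hfi : IntegrableOn f (Ioi 0))
    (hf1 : ∫ y in Ioi (0:ℝ), f y = 1) :
    (∀ m, 0 ≤ lamd m * Qd (lam m) *
        ∫ y in (0:ℝ)..lam m, Real.exp (Q y - Q (lam m)) * f y) ∧
    ∫ m in Ioi (0:ℝ), (lamd m * Qd (lam m) *
        ∫ y in (0:ℝ)..lam m, Real.exp (Q y - Q (lam m)) * f y) = 1 := by
  refine ⟨opP_nonneg hmP.le hQ hQ0 hQd (fun m => (hlamd m).le) hf0, ?_⟩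
  have hlam_pos : ∀ m ∈ Ioi (0:ℝ), 0 ≤ lam m := fun m hm =>
    (hmP.trans (hlam0 ▸ strictMono_of_hasDerivAt_pos hlam hlamd hm)).le
  calc ∫ m in Ioi 0, opP Q Qd lam lamd f m
      = ∫ m in Ioi 0, ∫ y in Ioi 0, kernelP Q Qd lam lamd m y * f y :=
        setIntegral_congr_fun measurableSet_Ioi fun m hm =>
          opP_eq_integral_kernelP_mul f (hlam_pos m hm)
    _ = ∫ y in Ioi 0, f y :=
        integral_integral_mul_of_integral_eq_one
          (measurable_kernelP hQ hlam).aestronglyMeasurable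
          (kernelP_nonneg hQd fun m => (hlamd m).le)
          (ae_of_all _ (integrableOn_kernelP hQ hQ0 hQtop hQd hlam hlamd hlam0 hlamtop))
          (ae_of_all _ (integral_kernelP hQ hQ0 hQtop hQd hlam hlamd hlam0 hlamtop)) hfi
    _ = 1 := hf1

/-- Pf(m) = ∫₀^{λ(m)} λ'(m) Q'(λ(m)) e^{Q(y)-Q(λ(m))} f(y) dy
is a stochastic operator on L¹[0,∞): for every density f, Pf ≥ 0 and ∫₀^∞ Pf = 1. -/
theorem stmt4 (m_P : ℝ) (hmP : 0 < m_P) (Q Qd lam lamd : ℝ → ℝ)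
    (hQ : ∀ m, HasDerivAt Q (Qd m) m) (hQ0 : ∀ m, m ≤ m_P → Q m = 0)
    (hQmono : StrictMonoOn Q (Ici m_P)) (hQtop : Tendsto Q atTop atTop)
    (hQnn : ∀ m, 0 ≤ Q m) (hQd : ∀ m, 0 ≤ Qd m)
    (hlam : ∀ m, HasDerivAt lam (lamd m) m) (hlamd : ∀ m, 0 < lamd m)
    (hlam0 : lam 0 = m_P) (hlamtop : Tendsto lam atTop atTop)
    (f : ℝ → ℝ) (hf0 : ∀ y, 0 ≤ f y) (hfi : IntegrableOn f (Ioi 0))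
    (hf1 : ∫ y in Ioi (0:ℝ), f y = 1) :
    (∀ m, 0 ≤ lamd m * Qd (lam m) *
        ∫ y in (0:ℝ)..lam m, Real.exp (Q y - Q (lam m)) * f y) ∧
    ∫ m in Ioi (0:ℝ), (lamd m * Qd (lam m) *
        ∫ y in (0:ℝ)..lam m, Real.exp (Q y - Q (lam m)) * f y) = 1 :=
  stmt4_general m_P hmP Q Qd lam lamd hQ hQ0 hQtop hQd hlam hlamd hlam0 hlamtop f hf0 hfi hf1
end

section
/- If f is a density on [0,∞) and m̄ > 0 satisfies ∫₀^{λ(m̄)} f(y) dy > 0, then Pf(m) > 0 for almost every m ≥ m̄, where Pf(m) = ∫₀^{λ(m)} λ'(m)Q'(λ(m)) e^{Q(y)-Q(λ(m))} f(y) dy. -/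
open MeasureTheory Real Set Filter

/-! The weight `exp (Q y - Q (λ m))` is positive, so the weighted integral has the same support
as `f` on `(0, λ m]`; that interval contains `(0, λ m̄]` because `λ` is increasing, and there `f`
has positive mass. -/

theorem lt_of_intervalIntegral_pos {μ : Measure ℝ} {f : ℝ → ℝ} {a b : ℝ} (hf : 0 ≤ f)
    (h : 0 < ∫ x in a..b, f x ∂μ) : a < b := by
  by_contra! hba
  rw [intervalIntegral.integral_of_ge hba, neg_pos] at h
  exact h.not_ge (setIntegral_nonneg measurableSet_Ioc fun x _ => hf x)

theorem intervalIntegral_mul_pos {μ : Measure ℝ} {f g : ℝ → ℝ} {a b : ℝ} (hf : 0 ≤ f)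
    (hg : ∀ x, 0 < g x) (hfi : IntervalIntegrable f μ a b)
    (hgfi : IntervalIntegrable (fun x => g x * f x) μ a b) (h : 0 < ∫ x in a..b, f x ∂μ) :
    0 < ∫ x in a..b, g x * f x ∂μ := by
  have hsupp : Function.support (fun x => g x * f x) = Function.support f :=
    Function.support_mul_of_ne_zero_left (fun x => (hg x).ne') f
  rw [intervalIntegral.integral_pos_iff_support_of_nonneg_ae' (ae_of_all _ hf) hfi] at h
  rwa [intervalIntegral.integral_pos_iff_support_of_nonneg_ae'
    (ae_of_all _ fun x => mul_nonneg (hg x).le (hf x)) hgfi, hsupp]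

theorem IntervalIntegrable.exp_sub_mul_of_monotone {μ : Measure ℝ} {Q f : ℝ → ℝ} {a b : ℝ}
    (hQ : Monotone Q) (hab : a ≤ b) (hf : IntervalIntegrable f μ a b) :
    IntervalIntegrable (fun y => exp (Q y - Q b) * f y) μ a b := by
  rw [intervalIntegrable_iff_integrableOn_Ioc_of_le hab] at hf ⊢
  refine hf.bdd_mul (c := 1) (hQ.measurable.sub_const _).exp.aestronglyMeasurable ?_
  filter_upwards [ae_restrict_mem measurableSet_Ioc] with y hy
  rw [norm_of_nonneg (exp_pos _).le, exp_le_one_iff, sub_nonpos]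
  exact hQ hy.2

theorem stmt6_general (Q Qd lam lamd : ℝ → ℝ)
    (hlammono : StrictMono lam)
    (hlamd : ∀ m, 0 < lamd m)
    (hQd : ∀ m, 0 < m → 0 < Qd (lam m)) (hQmono : Monotone Q)
    (f : ℝ → ℝ) (hf0 : ∀ y, 0 ≤ f y) (hfi : IntegrableOn f (Ioi 0))
    (mbar : ℝ) (hmbar : 0 < mbar)
    (hpos : 0 < ∫ y in (0:ℝ)..lam mbar, f y) :
    ∀ᵐ m ∂(volume : Measure ℝ), mbar ≤ m →
      0 < lamd m * Qd (lam m) *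
        ∫ y in (0:ℝ)..lam m, Real.exp (Q y - Q (lam m)) * f y := by
  filter_upwards with m hm
  have hlam_mbar : 0 < lam mbar := lt_of_intervalIntegral_pos hf0 hpos
  have hlam_le : lam mbar ≤ lam m := hlammono.monotone hm
  have hfm : IntervalIntegrable f volume 0 (lam m) :=
    (intervalIntegrable_iff_integrableOn_Ioc_of_le (hlam_mbar.le.trans hlam_le)).2
      (hfi.mono_set Ioc_subset_Ioi_self)
  have hmass : 0 < ∫ y in (0:ℝ)..lam m, f y :=
    hpos.trans_le (intervalIntegral.integral_mono_interval le_rfl hlam_mbar.le hlam_le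
      (ae_of_all _ hf0) hfm)
  have hweighted := intervalIntegral_mul_pos hf0 (fun y => exp_pos (Q y - Q (lam m))) hfm
    (hfm.exp_sub_mul_of_monotone hQmono (hlam_mbar.le.trans hlam_le)) hmass
  exact mul_pos (mul_pos (hlamd m) (hQd m (hmbar.trans_le hm))) hweighted

/-- if f is a density on [0,∞) and m̄ > 0 satisfies
∫₀^{λ(m̄)} f > 0, then Pf(m) > 0 for almost every m ≥ m̄. -/
theorem stmt6 (m_P : ℝ) (hmP : 0 < m_P) (Q Qd lam lamd : ℝ → ℝ)
    (hlammono : StrictMono lam) (hlam0 : lam 0 = m_P)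
    (hlamd : ∀ m, 0 < lamd m) (hlamtop : Tendsto lam atTop atTop)
    (hQd : ∀ m, 0 < m → 0 < Qd (lam m)) (hQmono : Monotone Q)
    (f : ℝ → ℝ) (hf0 : ∀ y, 0 ≤ f y) (hfi : IntegrableOn f (Ioi 0))
    (hf1 : ∫ y in Ioi (0:ℝ), f y = 1)
    (mbar : ℝ) (hmbar : 0 < mbar)
    (hpos : 0 < ∫ y in (0:ℝ)..lam mbar, f y) :
    ∀ᵐ m ∂(volume : Measure ℝ), mbar ≤ m →
      0 < lamd m * Qd (lam m) *
        ∫ y in (0:ℝ)..lam m, Real.exp (Q y - Q (lam m)) * f y :=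
  stmt6_general Q Qd lam lamd hlammono hlamd hQd hQmono f hf0 hfi mbar hmbar hpos
end

section
/- For any two densities f, g on [0,∞), there exists α > 0 such that Pf(m) > 0 and Pg(m) > 0 for almost every m ≥ α; in particular P overlaps supports: the supports of Pf and Pg intersect in a set of positive Lebesgue measure. -/
open MeasureTheory Real Set Filter

/-- The cell cycle operator Pf(m) = λ'(m) Q'(λ(m)) ∫₀^{λ(m)} e^{Q(y)-Q(λ(m))} f(y) dy. -/
noncomputable def cellOp (Q Qd lam lamd : ℝ → ℝ) (f : ℝ → ℝ) : ℝ → ℝ :=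
  fun m => lamd m * Qd (lam m) * ∫ y in (0:ℝ)..lam m, Real.exp (Q y - Q (lam m)) * f y

/-!
A density has positive mass on some interval `(0, R]`, hence on `(0, t]` for every `t ≥ R`.
Since `λ(m) → ∞`, for large `m` the integrand `e^{Q(y) - Q(λ(m))} f(y)` of `Pf(m)` is positive on
a set of positive measure in `(0, λ(m)]` and the prefactor `λ'(m) Q'(λ(m))` is positive. So `Pf`
and `Pg` are both positive on a whole half-line `[α, ∞)`.
-/

lemma eventually_measure_inter_Ioc_pos {μ : Measure ℝ} {s : Set ℝ} {a : ℝ}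
    (h : 0 < μ (s ∩ Ioi a)) : ∀ᶠ R in atTop, 0 < μ (s ∩ Ioc a R) := by
  have hmono : Monotone fun R => s ∩ Ioc a R := fun _ _ hRR' =>
    inter_subset_inter_right _ (Ioc_subset_Ioc_right hRR')
  have hunion : ⋃ R, s ∩ Ioc a R = s ∩ Ioi a := by
    rw [← inter_iUnion, iUnion_Ioc_right]
  have hlim := tendsto_measure_iUnion_atTop (μ := μ) hmono
  rw [hunion] at hlim
  exact hlim.eventually (eventually_gt_nhds h)

lemma setIntegral_exp_sub_mul_pos {Q f : ℝ → ℝ} (hQ : Monotone Q) (hf0 : ∀ y, 0 ≤ f y)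
    (hfi : IntegrableOn f (Ioi 0)) {t : ℝ}
    (ht : 0 < volume (Function.support f ∩ Ioc 0 t)) :
    0 < ∫ y in (0:ℝ)..t, exp (Q y - Q t) * f y := by
  have ht0 : 0 ≤ t := by
    by_contra! h
    simp [Ioc_eq_empty_of_le h.le] at ht
  have hweight : Measurable fun y => exp (Q y - Q t) :=
    measurable_exp.comp (hQ.measurable.sub measurable_const)
  have hint : IntegrableOn (fun y => exp (Q y - Q t) * f y) (Ioc 0 t) := by
    refine (hfi.mono_set Ioc_subset_Ioi_self).bdd_mul (c := 1)
      hweight.aestronglyMeasurable.restrict ?_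
    filter_upwards [ae_restrict_mem measurableSet_Ioc] with y hy
    rw [norm_of_nonneg (exp_pos _).le, exp_le_one_iff, sub_nonpos]
    exact hQ hy.2
  have hsupport : Function.support (fun y => exp (Q y - Q t) * f y) = Function.support f :=
    Function.support_mul_of_ne_zero_left (fun y => (exp_pos _).ne') f
  rw [intervalIntegral.integral_of_le ht0, setIntegral_pos_iff_support_of_nonneg_ae
    (.of_forall fun y => mul_nonneg (exp_pos _).le (hf0 y)) hint, hsupport]
  exact ht

lemma eventually_cellOp_pos {Q Qd lam lamd f : ℝ → ℝ}
    (hlamd : ∀ m, 0 < lamd m) (hlamtop : Tendsto lam atTop atTop)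
    (hQd : ∀ m, 0 < m → 0 < Qd (lam m)) (hQmono : Monotone Q)
    (hf0 : ∀ y, 0 ≤ f y) (hfi : IntegrableOn f (Ioi 0))
    (hf : 0 < ∫ y in Ioi (0:ℝ), f y) :
    ∀ᶠ m in atTop, 0 < cellOp Q Qd lam lamd f m := by
  rw [setIntegral_pos_iff_support_of_nonneg_ae (.of_forall hf0) hfi] at hf
  have hsupport := hlamtop.eventually (eventually_measure_inter_Ioc_pos hf)
  filter_upwards [hsupport, eventually_gt_atTop 0] with m hm hm0
  exact mul_pos (mul_pos (hlamd m) (hQd m hm0))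
    (setIntegral_exp_sub_mul_pos hQmono hf0 hfi hm)

theorem stmt7_general (Q Qd lam lamd : ℝ → ℝ)
    (hlamd : ∀ m, 0 < lamd m) (hlamtop : Tendsto lam atTop atTop)
    (hQd : ∀ m, 0 < m → 0 < Qd (lam m)) (hQmono : Monotone Q)
    (f g : ℝ → ℝ)
    (hf0 : ∀ y, 0 ≤ f y) (hfi : IntegrableOn f (Ioi 0))
    (hf1 : ∫ y in Ioi (0:ℝ), f y = 1)
    (hg0 : ∀ y, 0 ≤ g y) (hgi : IntegrableOn g (Ioi 0))
    (hg1 : ∫ y in Ioi (0:ℝ), g y = 1) :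
    ∃ α : ℝ, 0 < α ∧
      (∀ᵐ m ∂(volume : Measure ℝ), α ≤ m →
        0 < cellOp Q Qd lam lamd f m ∧ 0 < cellOp Q Qd lam lamd g m) ∧
      0 < volume (Function.support (cellOp Q Qd lam lamd f) ∩
        Function.support (cellOp Q Qd lam lamd g)) := by
  have hboth : ∀ᶠ m in atTop, 0 < cellOp Q Qd lam lamd f m ∧ 0 < cellOp Q Qd lam lamd g m :=
    (eventually_cellOp_pos hlamd hlamtop hQd hQmono hf0 hfi (hf1 ▸ one_pos)).and
      (eventually_cellOp_pos hlamd hlamtop hQd hQmono hg0 hgi (hg1 ▸ one_pos))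
  obtain ⟨α, hα⟩ := (hboth.and (eventually_gt_atTop 0)).exists_forall_of_atTop
  have hsub : Ici α ⊆ Function.support (cellOp Q Qd lam lamd f) ∩
      Function.support (cellOp Q Qd lam lamd g) :=
    fun m hm => ⟨(hα m hm).1.1.ne', (hα m hm).1.2.ne'⟩
  refine ⟨α, (hα α le_rfl).2, .of_forall fun m hm => (hα m hm).1, ?_⟩
  calc (0 : ENNReal) < volume (Ici α) := by simp [volume_Ici]
    _ ≤ _ := measure_mono hsub

/-- for any two densities f, g on [0,∞) there is α > 0 with
Pf(m) > 0 and Pg(m) > 0 for a.e. m ≥ α; in particular P overlaps supports: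
the supports of Pf and Pg intersect in a set of positive Lebesgue measure. -/
theorem stmt7 (m_P : ℝ) (hmP : 0 < m_P) (Q Qd lam lamd : ℝ → ℝ)
    (hlammono : StrictMono lam) (hlam0 : lam 0 = m_P)
    (hlamd : ∀ m, 0 < lamd m) (hlamtop : Tendsto lam atTop atTop)
    (hQd : ∀ m, 0 < m → 0 < Qd (lam m)) (hQmono : Monotone Q)
    (f g : ℝ → ℝ)
    (hf0 : ∀ y, 0 ≤ f y) (hfi : IntegrableOn f (Ioi 0))
    (hf1 : ∫ y in Ioi (0:ℝ), f y = 1)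
    (hg0 : ∀ y, 0 ≤ g y) (hgi : IntegrableOn g (Ioi 0))
    (hg1 : ∫ y in Ioi (0:ℝ), g y = 1) :
    ∃ α : ℝ, 0 < α ∧
      (∀ᵐ m ∂(volume : Measure ℝ), α ≤ m →
        0 < cellOp Q Qd lam lamd f m ∧ 0 < cellOp Q Qd lam lamd g m) ∧
      0 < volume (Function.support (cellOp Q Qd lam lamd f) ∩
        Function.support (cellOp Q Qd lam lamd g)) :=
  stmt7_general Q Qd lam lamd hlamd hlamtop hQd hQmono f g hf0 hfi hf1 hg0 hgi hg1
end

section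
/- The stationary resting-phase density R(m) = (c/g₁(m)) e^{-Q(m)} ∫₀ᵐ e^{Q(x)} f*(x) dx, where f* satisfies Pf* = f*, solves the delay-type stationary equation (g₁ R)'(m) = -φ(m) R(m) + φ(λ(m)) λ'(m) R(λ(m)). -/
open MeasureTheory Real Set Filter

/-!
Write `R = (c / g₁) u` with `u x = e^{-Q x} ∫₀ˣ e^{Q y} f y dy`, the solution of the linear equation
`u' = -Q' u + f` vanishing at `0`. Then `(g₁ R)' = c u' = -φ R + c f`, and the fixed-point
equation `P f = f`, read at `m`, says precisely that `c f m = φ(λ m) λ'(m) R(λ m)`.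
-/

noncomputable def variationOfConstants (Q f : ℝ → ℝ) (x : ℝ) : ℝ :=
  exp (-Q x) * ∫ y in (0:ℝ)..x, exp (Q y) * f y

theorem hasDerivAt_variationOfConstants {Q f : ℝ → ℝ} {q m : ℝ} (hQc : Continuous Q)
    (hQ : HasDerivAt Q q m) (hf : Continuous f) :
    HasDerivAt (variationOfConstants Q f) (-q * variationOfConstants Q f m + f m) m := by
  have hcont : Continuous fun y => exp (Q y) * f y := hQc.rexp.mul hf
  have hF : HasDerivAt (fun x => ∫ y in (0:ℝ)..x, exp (Q y) * f y) (exp (Q m) * f m) m :=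
    intervalIntegral.integral_hasDerivAt_right (hcont.intervalIntegrable 0 m)
      (hcont.stronglyMeasurableAtFilter _ _) hcont.continuousAt
  refine (hQ.neg.exp.mul hF).congr_deriv ?_
  simp only [variationOfConstants, Pi.neg_apply]
  rw [← mul_assoc, ← exp_add, neg_add_cancel, exp_zero]
  ring

theorem integral_exp_sub_mul_eq_variationOfConstants (Q f : ℝ → ℝ) (a : ℝ) :
    ∫ y in (0:ℝ)..a, exp (Q y - Q a) * f y = variationOfConstants Q f a := by
  rw [variationOfConstants, ← intervalIntegral.integral_const_mul]
  congr 1 with y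
  rw [← mul_assoc, ← exp_add, sub_eq_neg_add]

theorem stmt11_general (c : ℝ) (g₁ φ Q lam lamd f : ℝ → ℝ)
    (hgpos : ∀ m, 0 < g₁ m)
    (hQ : ∀ m, HasDerivAt Q (φ m / g₁ m) m)
    (hfC : Continuous f)
    (hfix : ∀ m, lamd m * (φ (lam m) / g₁ (lam m)) *
      (∫ y in (0:ℝ)..lam m, Real.exp (Q y - Q (lam m)) * f y) = f m)
    (R : ℝ → ℝ)
    (hR : ∀ m, R m = c / g₁ m * Real.exp (-Q m) *
      ∫ x in (0:ℝ)..m, Real.exp (Q x) * f x) :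
    ∀ m, HasDerivAt (fun x => g₁ x * R x)
      (-(φ m * R m) + φ (lam m) * lamd m * R (lam m)) m := by
  intro m
  set u := variationOfConstants Q f
  have hRu : ∀ x, R x = c / g₁ x * u x := fun x => by
    rw [hR, mul_assoc]; rfl
  have hgR : (fun x => g₁ x * R x) = fun x => c * u x := funext fun x => by
    rw [hRu]; field_simp [(hgpos x).ne']
  have hQc : Continuous Q := continuous_iff_continuousAt.2 fun x => (hQ x).continuousAt
  have hfix_m : f m = lamd m * (φ (lam m) / g₁ (lam m)) * u (lam m) := by
    rw [← hfix, integral_exp_sub_mul_eq_variationOfConstants]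
  rw [hgR]
  refine ((hasDerivAt_variationOfConstants hQc (hQ m) hfC).const_mul c).congr_deriv ?_
  rw [hRu, hRu, hfix_m]
  field_simp
  ring

/-- the stationary resting-phase density
R(m) = (c/g₁(m)) e^{-Q(m)} ∫₀ᵐ e^{Q(x)} f*(x) dx, where Pf* = f*,
solves (g₁R)'(m) = -φ(m)R(m) + φ(λ(m))λ'(m)R(λ(m)). -/
theorem stmt11 (m_P c : ℝ) (hc : 0 < c) (g₁ φ Q lam lamd f : ℝ → ℝ)
    (hgpos : ∀ m, 0 < g₁ m) (hgC : Continuous g₁) (hφC : Continuous φ)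
    (hQ : ∀ m, HasDerivAt Q (φ m / g₁ m) m)
    (hlam : ∀ m, HasDerivAt lam (lamd m) m) (hlamd : ∀ m, 0 < lamd m)
    (hfC : Continuous f)
    (hfix : ∀ m, lamd m * (φ (lam m) / g₁ (lam m)) *
      (∫ y in (0:ℝ)..lam m, Real.exp (Q y - Q (lam m)) * f y) = f m)
    (R : ℝ → ℝ)
    (hR : ∀ m, R m = c / g₁ m * Real.exp (-Q m) *
      ∫ x in (0:ℝ)..m, Real.exp (Q x) * f x) :
    ∀ m, HasDerivAt (fun x => g₁ x * R x)
      (-(φ m * R m) + φ (lam m) * lamd m * R (lam m)) m :=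
  stmt11_general c g₁ φ Q lam lamd f hgpos hQ hfC hfix R hR
end

section
/- If a stochastic operator T on L¹(X,μ) has two distinct invariant densities f₁ and f₂, then g = (f₁-f₂)⁺/‖(f₁-f₂)⁺‖ is also an invariant density of T, and its support is a proper subset (up to measure zero) of supp f₁ ∪ supp f₂ with μ(supp f₂ \ supp g) > 0. -/
/-!
A stochastic operator `T` is positive, so `T u⁺ ≥ T u = u` and `T u⁺ ≥ 0` whenever `T u = u`;
hence `T u⁺ ≥ u⁺`, and since `T` preserves integrals the difference `T u⁺ - u⁺ ≥ 0` has integral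
zero, i.e. `T u⁺ = u⁺`. Applied to `u = f₁ - f₂` this makes `g` invariant; `u⁺ ≠ 0` because
`f₁ ≠ f₂` have the same integral. The support of `g` is `{f₂ < f₁}`, and if it contained
`supp f₂` up to a null set, then `f₂ ≤ f₁` a.e., which with equal integrals forces `f₁ = f₂`.
-/

open MeasureTheory Function Filter Set
open scoped ENNReal

theorem setOf_lt_subset_support_union {X α : Type*} [Preorder α] [Zero α] (f g : X → α) :
    {x | g x < f x} ⊆ support f ∪ support g := by
  intro x (hx : g x < f x)
  rcases eq_or_ne (g x) 0 with hg | hg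
  · exact Or.inl (hg ▸ hx).ne'
  · exact Or.inr hg

namespace MeasureTheory.Lp

variable {X : Type*} [MeasurableSpace X] {μ : Measure X}

section

variable {p : ℝ≥0∞}

theorem support_smul_ae_eq {c : ℝ} (hc : c ≠ 0) (f : Lp ℝ p μ) :
    support ⇑(c • f) =ᵐ[μ] support ⇑f := by
  refine eventuallyEq_set.2 ?_
  filter_upwards [coeFn_smul c f] with x hx
  simp [hx, hc]

theorem support_posPart_sub_ae_eq (f g : Lp ℝ p μ) :
    support ⇑(posPart (f - g)) =ᵐ[μ] {x | g x < f x} := by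
  refine eventuallyEq_set.2 ?_
  filter_upwards [coeFn_posPart (f - g), coeFn_sub f g] with x hpos hsub
  rw [mem_support, hpos, hsub, Pi.sub_apply]
  simp

theorem posPart_eq_sup_zero (f : Lp ℝ p μ) : posPart f = f ⊔ 0 := by
  ext1
  filter_upwards [coeFn_posPart f, coeFn_sup f 0, coeFn_zero ℝ p μ] with x hpos hsup hzero
  rw [hpos, hsup, Pi.sup_apply, hzero, Pi.zero_apply]

theorem posPart_nonneg (f : Lp ℝ p μ) : 0 ≤ posPart f :=
  posPart_eq_sup_zero f ▸ le_sup_right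

instance : PosSMulMono ℝ (Lp ℝ p μ) where
  smul_le_smul_of_nonneg_left c hc f g hfg := by
    rw [← coeFn_le] at hfg ⊢
    filter_upwards [hfg, coeFn_smul c f, coeFn_smul c g] with x hx hcf hcg
    simpa [hcf, hcg] using mul_le_mul_of_nonneg_left hx hc

end

theorem norm_eq_integral_of_nonneg {f : Lp ℝ 1 μ} (hf : 0 ≤ f) : ‖f‖ = ∫ x, f x ∂μ := by
  rw [L1.norm_eq_integral_norm]
  refine integral_congr_ae ?_
  filter_upwards [(coeFn_nonneg f).2 hf] with x hx using Real.norm_of_nonneg hx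

theorem eq_of_le_of_integral_eq {f g : Lp ℝ 1 μ} (hfg : f ≤ g)
    (h : ∫ x, f x ∂μ = ∫ x, g x ∂μ) : f = g := by
  have : ‖g - f‖ = 0 := by
    rw [norm_eq_integral_of_nonneg (sub_nonneg.2 hfg), integral_congr_ae (coeFn_sub g f),
      integral_sub' (L1.integrable_coeFn g) (L1.integrable_coeFn f), h, sub_self]
  exact (sub_eq_zero.1 (norm_eq_zero.1 this)).symm

theorem integral_inv_norm_smul_of_nonneg {f : Lp ℝ 1 μ} (hf : 0 ≤ f) (hf₀ : f ≠ 0) :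
    ∫ x, (‖f‖⁻¹ • f) x ∂μ = 1 := by
  rw [integral_congr_ae (coeFn_smul _ f)]
  simp only [Pi.smul_apply, smul_eq_mul]
  rw [integral_const_mul, ← norm_eq_integral_of_nonneg hf,
    inv_mul_cancel₀ (norm_ne_zero_iff.2 hf₀)]

theorem posPart_sub_ne_zero {f g : Lp ℝ 1 μ} (hne : f ≠ g) (h : ∫ x, f x ∂μ = ∫ x, g x ∂μ) :
    posPart (f - g) ≠ 0 := by
  intro h₀
  rw [posPart_eq_sup_zero, sup_eq_right, sub_nonpos] at h₀
  exact hne (eq_of_le_of_integral_eq h₀ h)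

theorem map_posPart_eq_of_map_eq {T : Lp ℝ 1 μ →ₗ[ℝ] Lp ℝ 1 μ}
    (hTpos : ∀ f : Lp ℝ 1 μ, 0 ≤ f → 0 ≤ T f)
    (hTint : ∀ f : Lp ℝ 1 μ, ∫ x, T f x ∂μ = ∫ x, f x ∂μ)
    {u : Lp ℝ 1 μ} (hu : T u = u) : T (posPart u) = posPart u := by
  have hmono : Monotone T := fun f g hfg ↦
    sub_nonneg.1 (map_sub T g f ▸ hTpos _ (sub_nonneg.2 hfg))
  rw [posPart_eq_sup_zero]
  refine (eq_of_le_of_integral_eq (sup_le ?_ (hTpos _ le_sup_right)) (hTint _).symm).symm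
  calc u = T u := hu.symm
    _ ≤ T (u ⊔ 0) := hmono le_sup_left

end MeasureTheory.Lp

theorem stmt15_general {X : Type*} [MeasurableSpace X] (μ : Measure X)
    (T : Lp ℝ 1 μ →ₗ[ℝ] Lp ℝ 1 μ)
    (hTpos : ∀ f : Lp ℝ 1 μ, 0 ≤ f → 0 ≤ T f)
    (hTint : ∀ f : Lp ℝ 1 μ, ∫ x, T f x ∂μ = ∫ x, f x ∂μ)
    (f₁ f₂ : Lp ℝ 1 μ) (hne : f₁ ≠ f₂)
    (h₁ : 0 ≤ f₁)
    (hi₁ : (∫ x, f₁ x ∂μ) = 1) (hi₂ : (∫ x, f₂ x ∂μ) = 1)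
    (hf₁ : T f₁ = f₁) (hf₂ : T f₂ = f₂)
    (g : Lp ℝ 1 μ) (hg : g = ‖Lp.posPart (f₁ - f₂)‖⁻¹ • Lp.posPart (f₁ - f₂)) :
    0 ≤ g ∧ (∫ x, g x ∂μ) = 1 ∧ T g = g ∧
    μ (Function.support g \ (Function.support f₁ ∪ Function.support f₂)) = 0 ∧
    0 < μ (Function.support f₂ \ Function.support g) := by
  set p := Lp.posPart (f₁ - f₂)
  have hp : 0 ≤ p := Lp.posPart_nonneg _
  have hp₀ : p ≠ 0 := Lp.posPart_sub_ne_zero hne (hi₁.trans hi₂.symm)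
  have hsupp : Function.support ⇑g =ᵐ[μ] {x | f₂ x < f₁ x} := hg ▸
    (Lp.support_smul_ae_eq (inv_ne_zero (norm_ne_zero_iff.2 hp₀)) p).trans
      (Lp.support_posPart_sub_ae_eq f₁ f₂)
  refine ⟨hg ▸ smul_nonneg (inv_nonneg.2 (norm_nonneg p)) hp,
    hg ▸ Lp.integral_inv_norm_smul_of_nonneg hp hp₀, ?_, ?_, ?_⟩
  · rw [hg, map_smul, Lp.map_posPart_eq_of_map_eq hTpos hTint (by rw [map_sub, hf₁, hf₂])]
  · exact ae_le_set.1 (hsupp.le.trans (setOf_lt_subset_support_union _ _).eventuallyLE)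
  · refine pos_iff_ne_zero.2 fun h ↦ hne (Lp.eq_of_le_of_integral_eq ?_ (hi₂.trans hi₁.symm)).symm
    have hsupp₂ := (ae_le_set.2 h).trans hsupp.le
    rw [← Lp.coeFn_le]
    filter_upwards [hsupp₂, (Lp.coeFn_nonneg f₁).2 h₁] with x hx h₁x
    by_cases h₂x : f₂ x = 0
    · simpa [h₂x] using h₁x
    · exact (hx h₂x).le

/-- if a stochastic operator T on L¹(X,μ) has two distinct
invariant densities f₁, f₂, then g = (f₁-f₂)⁺/‖(f₁-f₂)⁺‖ is also an invariant
density, its support is (up to measure zero) a subset of supp f₁ ∪ supp f₂,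
and μ(supp f₂ \ supp g) > 0. -/
theorem stmt15 {X : Type*} [MeasurableSpace X] (μ : Measure X) [SigmaFinite μ]
    (T : Lp ℝ 1 μ →ₗ[ℝ] Lp ℝ 1 μ)
    (hTpos : ∀ f : Lp ℝ 1 μ, 0 ≤ f → 0 ≤ T f)
    (hTint : ∀ f : Lp ℝ 1 μ, ∫ x, T f x ∂μ = ∫ x, f x ∂μ)
    (f₁ f₂ : Lp ℝ 1 μ) (hne : f₁ ≠ f₂)
    (h₁ : 0 ≤ f₁) (h₂ : 0 ≤ f₂)
    (hi₁ : (∫ x, f₁ x ∂μ) = 1) (hi₂ : (∫ x, f₂ x ∂μ) = 1)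
    (hf₁ : T f₁ = f₁) (hf₂ : T f₂ = f₂)
    (g : Lp ℝ 1 μ) (hg : g = ‖Lp.posPart (f₁ - f₂)‖⁻¹ • Lp.posPart (f₁ - f₂)) :
    0 ≤ g ∧ (∫ x, g x ∂μ) = 1 ∧ T g = g ∧
    μ (Function.support g \ (Function.support f₁ ∪ Function.support f₂)) = 0 ∧
    0 < μ (Function.support f₂ \ Function.support g) :=
  stmt15_general μ T hTpos hTint f₁ f₂ hne h₁ hi₁ hi₂ hf₁ hf₂ g hg
end
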